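/- Let G be a graph state on N qubits with quadratic phase polynomial p(x) over 𝔽₂, and let c₁ be a vertex with neighborhood {b₁,…,b_n}. Then the local Clifford operator LC(c₁) = √(−iX_{c₁}) ∏_{j=1}^n √(iZ_{b_j}) maps |G⟩ to (up to global phase) the graph state whose phase polynomial is p(x) + ∑_{j<k} x_{b_j} x_{b_k} multiplied by the additional local phases ∏_j Z_{b_j}; i.e., LC(c₁)|G⟩ = (global phase) · (∏_{j=1}^n Z_{b_j}) |G'⟩ where G' is the local complement of G at c₁. -/

import Mathlib

open Matrix

noncomputable section

/-- Local complementation of a simple graph at a vertex `a`. -/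
def lc {V : Type*} (G : SimpleGraph V) (a : V) : SimpleGraph V where
  Adj b c := b ≠ c ∧ Xor (G.Adj b c) (G.Adj a b ∧ G.Adj a c)
  symm := by
    constructor
    intro b c h
    obtain ⟨hne, hx⟩ := h
    refine ⟨hne.symm, ?_⟩
    rw [G.adj_comm c b, and_comm]
    exact hx
  loopless := by
    constructor
    intro b h
    exact h.1 rfl

instance {V : Type*} (G : SimpleGraph V) (a : V) [DecidableEq V]
    [DecidableRel G.Adj] : DecidableRel (lc G a).Adj := fun b c =>
  inferInstanceAs (Decidable (b ≠ c ∧ Xor (G.Adj b c) (G.Adj a b ∧ G.Adj a c)))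

/-- The quadratic phase polynomial `p(x) = ∑_{{i,j}∈E} x_i x_j` of a graph. -/
def phasePoly {V : Type*} [Fintype V] [DecidableEq V] (G : SimpleGraph V)
    [DecidableRel G.Adj] (x : V → Fin 2) : ℕ :=
  ∑ e ∈ G.edgeFinset,
    Sym2.lift ⟨fun i j => (x i).val * (x j).val, fun _ _ => mul_comm _ _⟩ e

/-- The graph state `|G⟩ = 2^{−N/2} ∑_x (−1)^{p(x)} |x⟩`. -/
def gs {V : Type*} [Fintype V] [DecidableEq V] (G : SimpleGraph V)
    [DecidableRel G.Adj] : (V → Fin 2) → ℂ :=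
  fun x => ((1 / Real.sqrt 2 : ℝ) : ℂ) ^ (Fintype.card V) * (-1) ^ phasePoly G x

/-- `√(−iX) = (−I + iX)/√2` acting on qubit `c` (identity elsewhere). -/
def sqrtNegIXGate {V : Type*} [Fintype V] [DecidableEq V] (c : V) :
    Matrix (V → Fin 2) (V → Fin 2) ℂ :=
  fun x y => if ∀ i, i ≠ c → x i = y i
    then (if x c = y c then (-1 : ℂ) else Complex.I) * ((1 / Real.sqrt 2 : ℝ) : ℂ)
    else 0

/-!
Write `N` for the neighbourhood of `c₁` and `q(x) = ∑_{b ∈ N} x_b`. Since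
`(i + (-1)^a)/√2 = ((1 + i)/√2) i^a`, the diagonal factor is `((1 + i)/√2)^|N| i^{q(x)}`,
and `√(−iX_{c₁})` mixes the amplitude at `x` with the one at `x` with bit `c₁` flipped. Over `𝔽₂`,
flipping `x_{c₁}` changes the phase polynomial by `q(x)`, because exactly the edges at `c₁`
change their monomial. Local complementation at `c₁` toggles the edges between distinct
neighbours, which changes the phase polynomial by the number of such pairs with `x_b = x_d = 1`,
namely `q(x).choose 2`. What is left is the scalar identity
`i^q (−1 + i (−1)^q) = (−1 + i) (−1)^{q + q.choose 2}`, which fixes the global phase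
`((1 + i)/√2)^|N| (−1 + i)/√2`.
-/

open Complex Finset

theorem SimpleGraph.incidenceFinset_eq_image {V : Type*} [DecidableEq V] (G : SimpleGraph V)
    (v : V) [Fintype (G.neighborSet v)] :
    G.incidenceFinset v = (G.neighborFinset v).image (s(v, ·)) := by
  ext e
  induction e using Sym2.ind with
  | _ b c =>
    simp only [SimpleGraph.mem_incidenceFinset, SimpleGraph.mk'_mem_incidenceSet_iff,
      mem_image, SimpleGraph.mem_neighborFinset, Sym2.eq_iff]
    grind [SimpleGraph.adj_symm]

theorem Sym2.mk_mem_offDiag_image_iff {V : Type*} [DecidableEq V] (s : Finset V) (b d : V) :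
    s(b, d) ∈ s.offDiag.image Sym2.mk.uncurry ↔ b ≠ d ∧ b ∈ s ∧ d ∈ s := by
  simp only [mem_image, mem_offDiag, Prod.exists, Function.uncurry_apply_pair, Sym2.eq_iff]
  grind

theorem lc_adj {V : Type*} (G : SimpleGraph V) (a b c : V) :
    (lc G a).Adj b c ↔ b ≠ c ∧ Xor (G.Adj b c) (G.Adj a b ∧ G.Adj a c) :=
  Iff.rfl

section PhasePolynomialModTwo

open Fin.CommRing

theorem Fin.eq_add_one_of_ne : ∀ {a b : Fin 2}, a ≠ b → b = a + 1 := by decide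

theorem neg_one_pow_eq_of_natCast_eq {R : Type*} [Ring R] {m n : ℕ} (h : (m : Fin 2) = n) :
    (-1 : R) ^ m = (-1) ^ n := by
  rw [neg_one_pow_eq_pow_mod_two, neg_one_pow_eq_pow_mod_two (n := n)]
  congr 1
  simpa [Fin.ext_iff, Fin.val_natCast] using h

variable {V : Type*} [DecidableEq V]

theorem sum_offDiag_image_mul_map (s : Finset V) (x : V → Fin 2) :
    ∑ e ∈ s.offDiag.image Sym2.mk.uncurry, (e.map x).mul
      = ((∑ b ∈ s, (x b).val).choose 2 : ℕ) := by
  have mul_eq_ite : ∀ e : Sym2 (Fin 2), e.mul = if e = s(1, 1) then 1 else 0 := by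
    intro e
    induction e using Sym2.ind with
    | _ p q => revert p q; decide
  have sum_val_eq_card : ∑ b ∈ s, (x b).val = #{b ∈ s | x b = 1} := by
    rw [card_filter]
    refine sum_congr rfl fun b _ => ?_
    generalize x b = p
    revert p
    decide
  have filter_offDiag : {p ∈ s.offDiag | (Sym2.mk.uncurry p).map x = s(1, 1)}
      = {b ∈ s | x b = 1}.offDiag := by
    ext ⟨b, d⟩
    simp only [mem_filter, mem_offDiag, Function.uncurry_apply_pair, Sym2.map_mk,
      Sym2.eq_iff, Ne]
    grind
  simp_rw [mul_eq_ite]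
  rw [sum_boole, filter_image, filter_offDiag, Sym2.card_image_offDiag, sum_val_eq_card]

variable [Fintype V]

theorem natCast_phasePoly (G : SimpleGraph V) [DecidableRel G.Adj] (x : V → Fin 2) :
    (phasePoly G x : Fin 2) = ∑ e ∈ G.edgeFinset, (e.map x).mul := by
  rw [phasePoly, Nat.cast_sum]
  refine sum_congr rfl fun e _ => ?_
  induction e using Sym2.ind with
  | _ b c => simp [Sym2.mul_mk]

theorem sum_edgeFinset_mul_map_add_single (G : SimpleGraph V) [DecidableRel G.Adj] (c : V)
    (x : V → Fin 2) :
    ∑ e ∈ G.edgeFinset, (e.map (x + Pi.single c 1)).mul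
      = ∑ e ∈ G.edgeFinset, (e.map x).mul + ∑ b ∈ G.neighborFinset c, x b := by
  have away_from_c : ∀ e : Sym2 V, c ∉ e →
      (e.map (x + Pi.single c 1)).mul = (e.map x).mul := by
    intro e
    induction e using Sym2.ind with
    | _ b d =>
      intro hc
      simp only [Sym2.mem_iff, not_or] at hc
      simp [Sym2.mul_mk, Pi.single_apply, Ne.symm hc.1, Ne.symm hc.2]
  have at_c : ∀ b ∈ G.neighborFinset c,
      (s(c, b).map (x + Pi.single c 1)).mul = (s(c, b).map x).mul + x b := by
    intro b hb
    have hbc : b ≠ c := ((G.mem_neighborFinset c b).1 hb).ne'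
    simp only [Sym2.map_mk, Sym2.mul_mk, Pi.add_apply, Pi.single_eq_same,
      Pi.single_eq_of_ne hbc, add_zero]
    ring
  have hinj : Set.InjOn (s(c, ·)) (G.neighborFinset c) := fun _ _ _ _ h => Sym2.congr_right.1 h
  rw [← sum_filter_add_sum_filter_not G.edgeFinset (c ∈ ·),
    ← sum_filter_add_sum_filter_not G.edgeFinset (c ∈ ·) (fun e => (e.map x).mul),
    ← G.incidenceFinset_eq_filter, G.incidenceFinset_eq_image, sum_image hinj, sum_image hinj,
    sum_congr rfl at_c, sum_add_distrib,
    sum_congr rfl fun e he => away_from_c e (mem_filter.1 he).2]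
  ring

theorem sum_edgeFinset_lc_mul_map (G : SimpleGraph V) [DecidableRel G.Adj] (c : V)
    (x : V → Fin 2) :
    ∑ e ∈ (lc G c).edgeFinset, (e.map x).mul
      = ∑ e ∈ G.edgeFinset, (e.map x).mul
        + ∑ e ∈ (G.neighborFinset c).offDiag.image Sym2.mk.uncurry, (e.map x).mul := by
  rw [← Fintype.sum_ite_mem (lc G c).edgeFinset, ← Fintype.sum_ite_mem G.edgeFinset,
    ← Fintype.sum_ite_mem ((G.neighborFinset c).offDiag.image _), ← sum_add_distrib]
  refine sum_congr rfl fun e _ => ?_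
  induction e using Sym2.ind with
  | _ b d =>
    have add_self : ∀ a : Fin 2, a + a = 0 := by decide
    simp only [SimpleGraph.mem_edgeFinset, SimpleGraph.mem_edgeSet, lc_adj,
      Sym2.mk_mem_offDiag_image_iff, SimpleGraph.mem_neighborFinset]
    by_cases hbd : b = d
    · simp [hbd]
    by_cases hA : G.Adj b d <;> by_cases hN : G.Adj c b ∧ G.Adj c d <;>
      simp [hA, hN, hbd, add_self]

theorem gs_add_single (G : SimpleGraph V) [DecidableRel G.Adj] (c : V) (x : V → Fin 2) :
    gs G (x + Pi.single c 1) = (-1) ^ (∑ b ∈ G.neighborFinset c, (x b).val) * gs G x := by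
  have hparity : (phasePoly G (x + Pi.single c 1) : Fin 2)
      = ((phasePoly G x + ∑ b ∈ G.neighborFinset c, (x b).val : ℕ) : Fin 2) := by
    rw [Nat.cast_add, natCast_phasePoly, natCast_phasePoly, sum_edgeFinset_mul_map_add_single,
      Nat.cast_sum]
    simp only [Fin.cast_val_eq_self]
  rw [gs, gs, neg_one_pow_eq_of_natCast_eq hparity, pow_add]
  ring

theorem gs_lc (G : SimpleGraph V) [DecidableRel G.Adj] (c : V) (x : V → Fin 2) :
    gs (lc G c) x = (-1) ^ ((∑ b ∈ G.neighborFinset c, (x b).val).choose 2) * gs G x := by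
  have hparity : (phasePoly (lc G c) x : Fin 2)
      = ((phasePoly G x + (∑ b ∈ G.neighborFinset c, (x b).val).choose 2 : ℕ) : Fin 2) := by
    rw [Nat.cast_add, natCast_phasePoly, natCast_phasePoly, sum_edgeFinset_lc_mul_map,
      sum_offDiag_image_mul_map]
  rw [gs, gs, neg_one_pow_eq_of_natCast_eq hparity, pow_add]
  ring

end PhasePolynomialModTwo

theorem I_add_neg_one_pow_val (a : Fin 2) : I + (-1) ^ a.val = (1 + I) * I ^ a.val := by
  fin_cases a
  · simp [add_comm]
  · simp only [pow_one]
    linear_combination -I_sq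

theorem prod_I_add_neg_one_pow_val_mul {V : Type*} (s : Finset V) (x : V → Fin 2) (r : ℂ) :
    ∏ b ∈ s, (I + (-1) ^ (x b).val) * r = ((1 + I) * r) ^ #s * I ^ ∑ b ∈ s, (x b).val := by
  simp_rw [I_add_neg_one_pow_val, mul_right_comm _ _ r, prod_mul_distrib, prod_const, mul_pow,
    prod_pow_eq_pow_sum]

theorem I_pow_mul_neg_one_add_I_mul_neg_one_pow (q : ℕ) :
    I ^ q * (-1 + I * (-1) ^ q) = (-1 + I) * (-1) ^ (q + q.choose 2) := by
  induction q with
  | zero => simp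
  | succ q ih =>
    have hsq : ((-1 : ℂ) ^ q) ^ 2 = 1 := by
      rw [← pow_mul, mul_comm, pow_mul, neg_one_sq, one_pow]
    rw [Nat.choose_succ_succ', Nat.choose_one_right,
      show q + 1 + (q + q.choose 2) = (q + q.choose 2) + (q + 1) by ring,
      pow_add (-1 : ℂ) (q + q.choose 2), ← mul_assoc, ← ih]
    linear_combination (I ^ q * I) * hsq - I ^ q * (-1) ^ q * I_sq

theorem norm_add_I_mul_inv_sqrt_two {a : ℝ} (ha : a ^ 2 = 1) :
    ‖((a : ℂ) + I) * ((1 / √2 : ℝ) : ℂ)‖ = 1 := by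
  rw [norm_mul, norm_real, Real.norm_of_nonneg (by positivity), norm_def, normSq_apply]
  norm_num [← sq, ha]

theorem sqrtNegIXGate_apply {V : Type*} [Fintype V] [DecidableEq V] (c : V)
    (x y : V → Fin 2) :
    sqrtNegIXGate c x y = (1 / √2 : ℝ) *
      ((if y = x then -1 else 0) + (if y = x + Pi.single c 1 then I else 0)) := by
  by_cases hx : y = x
  · subst hx
    have : y ≠ y + Pi.single c 1 := fun h => by simpa using congrFun h c
    simp [sqrtNegIXGate, this]
  by_cases hf : y = x + Pi.single c 1
  · subst hf
    simp [sqrtNegIXGate, hx, Pi.single_apply, mul_comm]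
  have differs_off_c : ¬ ∀ i, i ≠ c → x i = y i := by
    intro h
    by_cases hc : x c = y c
    · exact hx (funext fun i => if hi : i = c then hi ▸ hc.symm else (h i hi).symm)
    · refine hf (funext fun i => ?_)
      by_cases hi : i = c
      · subst hi
        simpa using Fin.eq_add_one_of_ne hc
      · simpa [hi] using (h i hi).symm
  simp [sqrtNegIXGate, differs_off_c, hx, hf]

theorem sqrtNegIXGate_mulVec {V : Type*} [Fintype V] [DecidableEq V] (c : V)
    (v : (V → Fin 2) → ℂ) (x : V → Fin 2) :
    (sqrtNegIXGate c *ᵥ v) x = (1 / √2 : ℝ) * (-v x + I * v (x + Pi.single c 1)) := by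
  simp [mulVec, dotProduct, sqrtNegIXGate_apply, add_mul, mul_add, sum_add_distrib, mul_assoc]

/-- the local Clifford operator
`LC(c₁) = √(−iX_{c₁}) ∏_{j} √(iZ_{b_j})` (product over the neighbors of `c₁`,
where `√(iZ_b)` is the diagonal gate with entries `(i + (−1)^{x_b})/√2`) maps
`|G⟩` to, up to a global phase, `(∏_j Z_{b_j}) |G'⟩`, where `G'` is the local
complement of `G` at `c₁`. -/
theorem lc_clifford_action {V : Type*} [Fintype V] [DecidableEq V]
    (G : SimpleGraph V) [DecidableRel G.Adj] (c₁ : V) :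
    ∃ φ : ℂ, ‖φ‖ = 1 ∧
      (sqrtNegIXGate c₁ *
          Matrix.diagonal (fun x : V → Fin 2 => ∏ b ∈ G.neighborFinset c₁,
            ((Complex.I + (-1 : ℂ) ^ ((x b).val)) * ((1 / Real.sqrt 2 : ℝ) : ℂ)))).mulVec
        (gs G)
      = φ • (Matrix.diagonal (fun x : V → Fin 2 => ∏ b ∈ G.neighborFinset c₁,
            (-1 : ℂ) ^ ((x b).val))).mulVec (gs (lc G c₁)) := by
  set r : ℂ := ((1 / √2 : ℝ) : ℂ)
  set N := G.neighborFinset c₁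
  refine ⟨((1 + I) * r) ^ #N * ((-1 + I) * r), ?_, ?_⟩
  · have h₁ := norm_add_I_mul_inv_sqrt_two (a := 1) (by norm_num)
    have h₂ := norm_add_I_mul_inv_sqrt_two (a := -1) (by norm_num)
    rw [ofReal_one] at h₁
    rw [ofReal_neg, ofReal_one] at h₂
    rw [norm_mul, norm_pow, h₁, h₂, one_pow, one_mul]
  funext x
  have flip_off_N :
      ∑ b ∈ N, ((x + Pi.single c₁ 1 : V → Fin 2) b).val = ∑ b ∈ N, (x b).val :=
    sum_congr rfl fun b hb => by
      simp [Pi.single_eq_of_ne ((G.mem_neighborFinset c₁ b).1 hb).ne']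
  rw [← mulVec_mulVec, sqrtNegIXGate_mulVec, mulVec_diagonal, mulVec_diagonal, Pi.smul_apply,
    mulVec_diagonal, smul_eq_mul, prod_I_add_neg_one_pow_val_mul,
    prod_I_add_neg_one_pow_val_mul, flip_off_N, gs_add_single, gs_lc, prod_pow_eq_pow_sum]
  set q := ∑ b ∈ N, (x b).val
  linear_combination (((1 + I) * r) ^ #N * r * gs G x) * I_pow_mul_neg_one_add_I_mul_neg_one_pow q
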